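/- arXiv:2008.03885 — 4 statements merged into one kernel-verified Lean document; each statement's English description precedes it below -/
import Mathlib

section
/- Let ω ∈ ℝ, θ ∈ ℝ, ξ = sin²(θ/2), and θ̄ = θ + π. Define the red-point partial sweep R on u : ℤ → ℂ by (R u)(j) = u(j) if j is even, and (R u)(j) = (1−ω)u(j) + (ω/2)(u(j−1) + u(j+1)) if j is odd. Then for all a, b ∈ ℂ, R(a·φ_θ + b·φ_θ̄) = a′·φ_θ + b′·φ_θ̄, where φ_θ(j) = exp(iθj) and the coefficient vector satisfies [a′; b′] = S^R(θ)·[a; b] with the 2×2 matrix S^R(θ) = I − ω·[[1, −1], [−1, 1]]·diag(ξ, 1−ξ). In particular R leaves the subspace 𝔼_θ = span{φ_θ, φ_θ̄} invariant. -/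
/-!
On the Fourier modes `φ_θ(j) = e^{iθj}` the aliased mode is `φ_{θ+π} = (-1)^j φ_θ`, so
`a φ_θ + b φ_{θ+π}` equals `(a + b) φ_θ` at even points and `(a - b) φ_θ` at odd points.
The red sweep keeps the even values and, at an odd point `j`, combines `(a - b) φ_θ(j)` with
the even neighbours `(a + b) (φ_θ(j - 1) + φ_θ(j + 1)) = (a + b) · 2 cos θ · φ_θ(j)`.
Since `cos θ = 1 - 2ξ`, both results are read off as the two rows of `S^R(θ)`.
-/

open Complex Matrix

theorem Complex.exp_I_mul_add_pi_mul_intCast (θ : ℂ) (j : ℤ) :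
    exp (I * (θ + Real.pi) * j) = (-1) ^ j * exp (I * θ * j) := by
  rw [show I * (θ + Real.pi) * j = j * (Real.pi * I) + I * θ * j by ring, exp_add, exp_int_mul,
    exp_pi_mul_I]

theorem Complex.exp_I_mul_sub_one_add_exp_I_mul_add_one (θ : ℂ) (j : ℤ) :
    exp (I * θ * (j - 1 : ℤ)) + exp (I * θ * (j + 1 : ℤ)) = 2 * cos θ * exp (I * θ * j) := by
  rw [show I * θ * (j - 1 : ℤ) = -θ * I + I * θ * j by push_cast; ring,
    show I * θ * (j + 1 : ℤ) = θ * I + I * θ * j by push_cast; ring,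
    exp_add, exp_add, exp_mul_I, exp_mul_I, cos_neg, sin_neg]
  ring

theorem Matrix.mulVec_one_sub_smul_mul_diag {R : Type*} [CommRing R] (ω ξ a b : R) :
    (1 - ω • (!![1, -1; -1, 1] * !![ξ, 0; 0, 1 - ξ])) *ᵥ ![a, b]
      = ![(1 - ω * ξ) * a + ω * (1 - ξ) * b, ω * ξ * a + (1 - ω * (1 - ξ)) * b] := by
  ext i
  fin_cases i <;> simp [mulVec, dotProduct, Fin.sum_univ_two, one_apply, sub_mul] <;> ring

open Matrix in
/-- The red partial sweep (relaxing odd points) of damped red-black relaxation for the 1D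
Poisson stencil leaves `𝔼_θ = span{φ_θ, φ_{θ+π}}` invariant, acting on coefficient vectors
by the matrix symbol `S^R(θ) = I − ω·[[1,−1],[−1,1]]·diag(ξ, 1−ξ)`, `ξ = sin²(θ/2)`. -/
theorem red_sweep_1d_symbol (ω θ : ℝ)
    (ξ : ℝ) (hξ : ξ = (Real.sin (θ / 2)) ^ 2)
    (φ φbar : ℤ → ℂ)
    (hφ : ∀ j : ℤ, φ j = Complex.exp (Complex.I * θ * j))
    (hφbar : ∀ j : ℤ, φbar j = Complex.exp (Complex.I * (θ + Real.pi) * j))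
    (R : (ℤ → ℂ) → (ℤ → ℂ))
    (hR : ∀ (u : ℤ → ℂ) (j : ℤ),
      R u j = if Odd j then
          (1 - (ω : ℂ)) * u j + ((ω : ℂ) / 2) * (u (j - 1) + u (j + 1))
        else u j)
    (SR : Matrix (Fin 2) (Fin 2) ℂ)
    (hSR : SR = 1 - (ω : ℂ) •
      (!![1, -1; -1, 1] * !![(ξ : ℂ), 0; 0, 1 - (ξ : ℂ)])) :
    ∀ a b : ℂ,
      R (fun j => a * φ j + b * φbar j)
        = fun j => (SR.mulVec ![a, b] 0) * φ j + (SR.mulVec ![a, b] 1) * φbar j := by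
  intro a b
  funext j
  have hbar (k : ℤ) : φbar k = (-1) ^ k * φ k := by
    rw [hφbar, hφ, exp_I_mul_add_pi_mul_intCast]
  have hcos : Real.cos θ = 1 - 2 * ξ := by
    rw [hξ, ← Real.cos_two_mul_eq_one_sub, mul_div_cancel₀ θ two_ne_zero]
  rw [hR, hSR, mulVec_one_sub_smul_mul_diag]
  simp only [cons_val_zero, cons_val_one, hbar]
  rcases Int.even_or_odd j with hj | hj
  · rw [if_neg (Int.not_odd_iff_even.mpr hj), hj.neg_one_zpow]
    ring
  · have hsum : φ (j - 1) + φ (j + 1) = 2 * (1 - 2 * ξ) * φ j := by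
      rw [hφ, hφ, hφ, exp_I_mul_sub_one_add_exp_I_mul_add_one, ← ofReal_cos, hcos]
      push_cast
      ring
    rw [if_pos hj, hj.neg_one_zpow, (hj.sub_odd odd_one).neg_one_zpow, hj.add_one.neg_one_zpow]
    linear_combination ω / 2 * (a + b) * hsum
end

section
/- For every ξ ∈ ℝ, with ω = 1: S^R(ξ) · K(ξ) = 0, where S^R(ξ) = I₂ − [[1, −1], [−1, 1]]·diag(ξ, 1−ξ) and K(ξ) = [[ξ, −(1−ξ)], [−ξ, 1−ξ]]. That is, one undamped red partial sweep after coarse-grid correction annihilates the error on every invariant Fourier subspace, so the two-level cycle with ω = 1 and post-smoothing is a direct solver for the 1D Poisson equation. -/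
/-! Both `[[1, -1], [-1, 1]]` and `K(ξ)` have rank one with column space spanned by
`v = (1, -1)`, so `S^R(ξ) K(ξ) = (1 - vᵀ D v) K(ξ)` with `D = diag(ξ, 1 - ξ)`; and
`vᵀ D v = ξ + (1 - ξ) = 1`. -/

namespace Matrix

variable {n m R : Type*} [Fintype n] [DecidableEq n] [CommRing R]

theorem one_sub_vecMulVec_mul_mul_vecMulVec_eq_zero (v : n → R) (w : m → R) (D : Matrix n n R)
    (h : v ⬝ᵥ D *ᵥ v = 1) :
    (1 - vecMulVec v v * D) * vecMulVec v w = 0 := by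
  rw [Matrix.sub_mul, Matrix.one_mul, Matrix.mul_assoc, mul_vecMulVec, vecMulVec_mul_vecMulVec,
    h, one_smul, sub_self]

end Matrix

open Matrix in
/-- With `ω = 1`, `S^R(ξ) · K(ξ) = 0`: one undamped red partial sweep after coarse-grid
correction annihilates the error on every invariant Fourier subspace, so the two-level
cycle with `ω = 1` and post-smoothing is a direct solver for the 1D Poisson equation. -/
theorem red_sweep_after_correction_annihilates (ξ : ℝ) :
    ((1 : Matrix (Fin 2) (Fin 2) ℝ) - !![1, -1; -1, 1] * !![ξ, 0; 0, 1 - ξ])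
        * !![ξ, -(1 - ξ); -ξ, 1 - ξ] = 0 := by
  have hA : !![1, -1; -1, 1] = vecMulVec ![(1 : ℝ), -1] ![1, -1] := by
    ext i j; fin_cases i <;> fin_cases j <;> simp [vecMulVec_apply]
  have hK : !![ξ, -(1 - ξ); -ξ, 1 - ξ] = vecMulVec ![(1 : ℝ), -1] ![ξ, -(1 - ξ)] := by
    ext i j; fin_cases i <;> fin_cases j <;> simp [vecMulVec_apply]
  rw [hA, hK]
  apply one_sub_vecMulVec_mul_mul_vecMulVec_eq_zero
  simp [dotProduct, mulVec, Fin.sum_univ_two]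
end

section
/- Let ξ ∈ ℝ and ω = 1. Then the full red-black sweep matrix symbol factors as S^B(ξ)·S^R(ξ) = (1−2ξ)·[1−ξ; −ξ]·[1, 1], where S^R(ξ) = I₂ − [[1, −1], [−1, 1]]·diag(ξ, 1−ξ) and S^B(ξ) = I₂ − [[1, 1], [1, 1]]·diag(ξ, 1−ξ). Consequently S^B(ξ)S^R(ξ) has trace (1−2ξ)², determinant 0, and its eigenvalues are 0 and (1−2ξ)². -/
/-!
Each half sweep is a rank-one correction of the identity, and with `ω = 1` their product
collapses to the rank-one matrix `(1 - 2ξ) • u vᵀ` with `u = (1 - ξ, -ξ)` and `v = (1, 1)`.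
An outer product `u vᵀ` of size two has determinant `0`, trace `u ⬝ v` and characteristic
polynomial `X (X - u ⬝ v)`, and here `(1 - 2ξ) (u ⬝ v) = (1 - 2ξ)²`.
-/

open Matrix Polynomial

section

variable {R : Type*} [CommRing R]

theorem col_mul_row_eq_vecMulVec (a b c d : R) :
    !![a; b] * !![c, d] = vecMulVec ![a, b] ![c, d] := by
  ext i j
  fin_cases i <;> fin_cases j <;> simp [vecMulVec_apply]

theorem charpoly_vecMulVec_fin_two (u v : Fin 2 → R) :
    (vecMulVec u v).charpoly = X * (X - C (u ⬝ᵥ v)) := by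
  rw [charpoly_vecMulVec, Fintype.card_fin, smul_eq_C_mul]
  ring

theorem redBlack_full_sweep_eq_smul_col_mul_row (ξ : R) :
    (1 - !![1, 1; 1, 1] * !![ξ, 0; 0, 1 - ξ]) * (1 - !![1, -1; -1, 1] * !![ξ, 0; 0, 1 - ξ]) =
      (1 - 2 * ξ) • (!![1 - ξ; -ξ] * !![(1 : R), 1]) := by
  ext i j
  fin_cases i <;> fin_cases j <;> simp [mul_apply, one_apply] <;> ring

end

open Matrix Polynomial in
/-- With `ω = 1`, the full red-black sweep symbol factors as
`S^B(ξ)·S^R(ξ) = (1−2ξ)·[1−ξ; −ξ]·[1, 1]`; consequently it has trace `(1−2ξ)²`,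
determinant `0`, and eigenvalues `0` and `(1−2ξ)²` (its characteristic polynomial is
`X·(X − (1−2ξ)²)`). -/
theorem full_sweep_factorization (ξ : ℝ)
    (SR SB : Matrix (Fin 2) (Fin 2) ℝ)
    (hSR : SR = 1 - !![1, -1; -1, 1] * !![ξ, 0; 0, 1 - ξ])
    (hSB : SB = 1 - !![1, 1; 1, 1] * !![ξ, 0; 0, 1 - ξ]) :
    SB * SR = (1 - 2 * ξ) • (!![1 - ξ; -ξ] * !![(1 : ℝ), 1]) ∧
    Matrix.trace (SB * SR) = (1 - 2 * ξ) ^ 2 ∧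
    (SB * SR).det = 0 ∧
    (SB * SR).charpoly = X * (X - C ((1 - 2 * ξ) ^ 2)) := by
  have hsweep : SB * SR = (1 - 2 * ξ) • (!![1 - ξ; -ξ] * !![(1 : ℝ), 1]) := by
    rw [hSB, hSR, redBlack_full_sweep_eq_smul_col_mul_row]
  have hrankOne : SB * SR = vecMulVec ((1 - 2 * ξ) • ![1 - ξ, -ξ]) ![1, 1] := by
    rw [hsweep, col_mul_row_eq_vecMulVec, smul_vecMulVec]
  have hdot : ((1 - 2 * ξ) • ![1 - ξ, -ξ]) ⬝ᵥ ![1, 1] = (1 - 2 * ξ) ^ 2 := by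
    simp only [dotProduct, Pi.smul_apply, smul_eq_mul, Fin.sum_univ_two, cons_val_zero,
      cons_val_one, cons_val_fin_one]
    ring
  refine ⟨hsweep, ?_, ?_, ?_⟩
  · rw [hrankOne, trace_vecMulVec, hdot]
  · rw [hrankOne, det_vecMulVec]
  · rw [hrankOne, charpoly_vecMulVec_fin_two, hdot]
end

section
/- Let ω ∈ ℝ, θ = (θ₁, θ₂) ∈ ℝ², ξ = (1/2)(sin²(θ₁/2) + sin²(θ₂/2)), and θ̄ = (θ₁+π, θ₂+π). Define the two-dimensional red partial sweep R on u : ℤ² → ℂ by (R u)(j₁,j₂) = u(j₁,j₂) if j₁+j₂ is even, and (R u)(j₁,j₂) = (1−ω)u(j₁,j₂) + (ω/4)(u(j₁−1,j₂) + u(j₁+1,j₂) + u(j₁,j₂−1) + u(j₁,j₂+1)) if j₁+j₂ is odd. Then for all a, b ∈ ℂ, R(a·φ_θ + b·φ_θ̄) = a′·φ_θ + b′·φ_θ̄ with [a′; b′] = (I₂ − ω·[[1, −1], [−1, 1]]·diag(ξ, 1−ξ))·[a; b]. In particular, the two-dimensional red partial-sweep symbol has the exact same form as in one dimension, with ξ_θ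 redefined as (1/2)(sin²(θ₁/2)+sin²(θ₂/2)). -/
/-! The Fourier mode `φ_θ` is a character of `ℤ²`, so the five-point neighbour sum multiplies
it by `2 (cos θ₁ + cos θ₂) = 4 (1 - 2ξ)`, and multiplies `φ_θ̄` by the opposite factor since
`cos (t + π) = -cos t`. Moreover `φ_θ̄ = (-1)^(j₁+j₂) φ_θ`: on black points `φ_θ̄ = φ_θ` and the
sweep is the identity; on red points `φ_θ̄ = -φ_θ`, and comparing the coefficient of `φ_θ` on
both sides gives the symbol. -/

open Complex

noncomputable def planeWave (θ₁ θ₂ : ℝ) (j : ℤ × ℤ) : ℂ :=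
  exp (I * (θ₁ * j.1 + θ₂ * j.2))

lemma planeWave_add (θ₁ θ₂ : ℝ) (j k : ℤ × ℤ) :
    planeWave θ₁ θ₂ (j + k) = planeWave θ₁ θ₂ k * planeWave θ₁ θ₂ j := by
  simp only [planeWave, ← exp_add, Prod.fst_add, Prod.snd_add]
  congr 1
  push_cast
  ring

lemma planeWave_neighbor_sum (θ₁ θ₂ : ℝ) (j₁ j₂ : ℤ) :
    planeWave θ₁ θ₂ (j₁ - 1, j₂) + planeWave θ₁ θ₂ (j₁ + 1, j₂)
      + planeWave θ₁ θ₂ (j₁, j₂ - 1) + planeWave θ₁ θ₂ (j₁, j₂ + 1)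
      = 2 * ((Real.cos θ₁ + Real.cos θ₂ : ℝ) : ℂ) * planeWave θ₁ θ₂ (j₁, j₂) := by
  have neighbor (k₁ k₂ : ℤ) : planeWave θ₁ θ₂ (j₁ + k₁, j₂ + k₂)
      = planeWave θ₁ θ₂ (k₁, k₂) * planeWave θ₁ θ₂ (j₁, j₂) :=
    planeWave_add θ₁ θ₂ (j₁, j₂) (k₁, k₂)
  have h₁ := neighbor (-1) 0
  have h₂ := neighbor 1 0
  have h₃ := neighbor 0 (-1)
  have h₄ := neighbor 0 1
  simp only [add_zero, ← sub_eq_add_neg] at h₁ h₂ h₃ h₄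
  rw [h₁, h₂, h₃, h₄, ofReal_add, ofReal_cos, ofReal_cos, mul_add, two_cos, two_cos]
  simp only [planeWave]
  push_cast
  ring_nf

lemma planeWave_add_pi (θ₁ θ₂ : ℝ) (j : ℤ × ℤ) :
    planeWave (θ₁ + Real.pi) (θ₂ + Real.pi) j = (-1) ^ (j.1 + j.2) * planeWave θ₁ θ₂ j := by
  rw [planeWave, planeWave, ← exp_pi_mul_I, ← exp_int_mul, ← exp_add]
  congr 1
  push_cast
  ring

lemma cos_add_cos_eq_two_sub_sin_sq_half (θ₁ θ₂ : ℝ) :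
    Real.cos θ₁ + Real.cos θ₂ = 2 - 2 * (Real.sin (θ₁ / 2) ^ 2 + Real.sin (θ₂ / 2) ^ 2) := by
  simp only [Real.sin_sq_eq_half_sub, mul_div_cancel₀ _ (two_ne_zero' ℝ)]
  ring

lemma one_sub_smul_mul_diag_mulVec {R : Type*} [CommRing R] (ω ξ a b : R) :
    (1 - ω • (!![1, -1; -1, 1] * !![ξ, 0; 0, 1 - ξ])).mulVec ![a, b]
      = ![(1 - ω * ξ) * a + ω * (1 - ξ) * b, ω * ξ * a + (1 - ω * (1 - ξ)) * b] := by
  ext i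
  fin_cases i
  · simp [Matrix.mulVec, dotProduct, Fin.sum_univ_two]
    ring
  · simp [Matrix.mulVec, dotProduct, Fin.sum_univ_two]

open Matrix in
/-- The 2D red partial sweep (relaxing points with `j₁+j₂` odd) of damped red-black
relaxation for the five-point Poisson stencil leaves `𝔼_θ = span{φ_θ, φ_θ̄}` invariant
(`θ̄ = (θ₁+π, θ₂+π)`), with the same matrix symbol
`I − ω·[[1,−1],[−1,1]]·diag(ξ, 1−ξ)` as in 1D, where
`ξ = (1/2)(sin²(θ₁/2)+sin²(θ₂/2))`. -/
theorem red_sweep_2d_symbol (ω θ₁ θ₂ : ℝ)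
    (ξ : ℝ) (hξ : ξ = (1 / 2) * ((Real.sin (θ₁ / 2)) ^ 2 + (Real.sin (θ₂ / 2)) ^ 2))
    (φ φbar : ℤ × ℤ → ℂ)
    (hφ : ∀ j : ℤ × ℤ, φ j = Complex.exp (Complex.I * (θ₁ * j.1 + θ₂ * j.2)))
    (hφbar : ∀ j : ℤ × ℤ, φbar j =
      Complex.exp (Complex.I * ((θ₁ + Real.pi) * j.1 + (θ₂ + Real.pi) * j.2)))
    (R : (ℤ × ℤ → ℂ) → (ℤ × ℤ → ℂ))
    (hR : ∀ (u : ℤ × ℤ → ℂ) (j₁ j₂ : ℤ),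
      R u (j₁, j₂) = if Odd (j₁ + j₂) then
          (1 - (ω : ℂ)) * u (j₁, j₂) + ((ω : ℂ) / 4) *
            (u (j₁ - 1, j₂) + u (j₁ + 1, j₂) + u (j₁, j₂ - 1) + u (j₁, j₂ + 1))
        else u (j₁, j₂))
    (SR : Matrix (Fin 2) (Fin 2) ℂ)
    (hSR : SR = 1 - (ω : ℂ) •
      (!![1, -1; -1, 1] * !![(ξ : ℂ), 0; 0, 1 - (ξ : ℂ)])) :
    ∀ a b : ℂ,
      R (fun j => a * φ j + b * φbar j)
        = fun j => (SR.mulVec ![a, b] 0) * φ j + (SR.mulVec ![a, b] 1) * φbar j := by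
  intro a b
  obtain rfl : φ = planeWave θ₁ θ₂ := funext hφ
  obtain rfl : φbar = planeWave (θ₁ + Real.pi) (θ₂ + Real.pi) :=
    funext fun j => by rw [hφbar, planeWave]; push_cast; rfl
  have hcos : Real.cos θ₁ + Real.cos θ₂ = 2 - 4 * ξ := by
    rw [cos_add_cos_eq_two_sub_sin_sq_half, hξ]
    ring
  funext ⟨j₁, j₂⟩
  have hN := planeWave_neighbor_sum θ₁ θ₂ j₁ j₂
  have hNbar := planeWave_neighbor_sum (θ₁ + Real.pi) (θ₂ + Real.pi) j₁ j₂
  rw [hcos] at hN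
  rw [Real.cos_add_pi, Real.cos_add_pi, ← neg_add, hcos] at hNbar
  have halias := planeWave_add_pi θ₁ θ₂ (j₁, j₂)
  rw [hR, hSR, one_sub_smul_mul_diag_mulVec]
  simp only [Matrix.cons_val_zero, Matrix.cons_val_one]
  split_ifs with hparity
  · rw [hparity.neg_one_zpow] at halias
    rw [halias] at hNbar ⊢
    push_cast at hN hNbar
    linear_combination (ω / 4 * a) * hN + (ω / 4 * b) * hNbar
  · rw [(Int.not_odd_iff_even.mp hparity).neg_one_zpow, one_mul] at halias
    rw [halias]
    ring
end
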